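/- arXiv:2303.08723 — 5 statements merged into one kernel-verified Lean document; each statement's English description precedes it below -/
import Mathlib

section
/- Fix natural numbers s < s' and suppose Assumption A1 holds for g. Then for all natural numbers t₀, t with s' < t₀ ≤ t, one has I_{t,s,s'} ⊆ I_{t₀,s,s'}; that is, the set of means on which the candidate change s beats the candidate change s' is non-increasing in time. -/
/-- The functional cost of candidate change `s` at time `t`, evaluated at mean `μ`:
`f̃_{t,s}(μ) = F(s) + Σ_{i=s+1}^{t} (y i − μ)² + α − β·g(t−s)`. -/
noncomputable def ftilde (y F : ℕ → ℝ) (α β : ℝ) (g : ℕ → ℝ) (t s : ℕ) (μ : ℝ) : ℝ :=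
  F s + ∑ i ∈ Finset.Icc (s + 1) t, (y i - μ) ^ 2 + α - β * g (t - s)

/-- `I_{t,s,s'}`: the set of means on which change `s` beats change `s'` at time `t`. -/
def Iset (y F : ℕ → ℝ) (α β : ℝ) (g : ℕ → ℝ) (t s s' : ℕ) : Set ℝ :=
  {μ : ℝ | ftilde y F α β g t s μ ≤ ftilde y F α β g t s' μ}

/-!
Between times `t₀` and `t` both costs `f̃_{·,s}` and `f̃_{·,s'}` gain the same data term
`Σ_{i=t₀+1}^{t} (y_i − μ)²`, so their difference changes only through the penalty, by
`β·([g(t−s') − g(t−s)] − [g(t₀−s') − g(t₀−s)])`. By A1 and `β ≥ 0` this is `≥ 0`, hence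
`f̃_{t,s}(μ) ≤ f̃_{t,s'}(μ)` forces `f̃_{t₀,s}(μ) ≤ f̃_{t₀,s'}(μ)`.
-/

section

variable (y F : ℕ → ℝ) (α β : ℝ) (g : ℕ → ℝ)

theorem ftilde_eq_add_sum_Icc {s t₀ t : ℕ} (hs : s ≤ t₀) (ht : t₀ ≤ t) (μ : ℝ) :
    ftilde y F α β g t s μ =
      ftilde y F α β g t₀ s μ + ∑ i ∈ Finset.Icc (t₀ + 1) t, (y i - μ) ^ 2
        - β * (g (t - s) - g (t₀ - s)) := by
  have hsplit : ∑ i ∈ Finset.Icc (s + 1) t, (y i - μ) ^ 2 =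
      ∑ i ∈ Finset.Icc (s + 1) t₀, (y i - μ) ^ 2 + ∑ i ∈ Finset.Icc (t₀ + 1) t, (y i - μ) ^ 2 := by
    simp only [Finset.Icc_add_one_left_eq_Ioc]
    exact (Finset.sum_Ioc_consecutive _ hs ht).symm
  simp only [ftilde, hsplit]
  ring

theorem ftilde_sub_ftilde_eq {s s' t₀ t : ℕ} (hs : s ≤ t₀) (hs' : s' ≤ t₀) (ht : t₀ ≤ t)
    (μ : ℝ) :
    ftilde y F α β g t s μ - ftilde y F α β g t s' μ =
      ftilde y F α β g t₀ s μ - ftilde y F α β g t₀ s' μ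
        + β * ((g (t - s') - g (t - s)) - (g (t₀ - s') - g (t₀ - s))) := by
  rw [ftilde_eq_add_sum_Icc y F α β g hs ht, ftilde_eq_add_sum_Icc y F α β g hs' ht]
  ring

end

/-- under Assumption A1, for fixed `s < s'`, the comparison set
`I_{t,s,s'}` is non-increasing in `t`: for `s' < t₀ ≤ t`, `I_{t,s,s'} ⊆ I_{t₀,s,s'}`. -/
theorem Iset_antitone (y F : ℕ → ℝ) (α β : ℝ) (hβ : 0 ≤ β) (g : ℕ → ℝ)
    (hA1 : ∀ s s' : ℕ, s < s' →
      (∀ t₁ t₂ : ℕ, s' < t₁ → t₁ ≤ t₂ →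
        g (t₁ - s') - g (t₁ - s) ≤ g (t₂ - s') - g (t₂ - s)) ∧
      Filter.Tendsto (fun t : ℕ => g (t - s') - g (t - s)) Filter.atTop (nhds 0))
    (s s' : ℕ) (hss' : s < s') :
    ∀ t₀ t : ℕ, s' < t₀ → t₀ ≤ t →
      Iset y F α β g t s s' ⊆ Iset y F α β g t₀ s s' := by
  intro t₀ t ht₀ ht μ hμ
  have hgap : 0 ≤ β * ((g (t - s') - g (t - s)) - (g (t₀ - s') - g (t₀ - s))) :=
    mul_nonneg hβ (sub_nonneg.2 ((hA1 s s' hss').1 t₀ t ht₀ ht))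
  have hdiff := ftilde_sub_ftilde_eq y F α β g (hss'.trans ht₀).le ht₀.le ht μ
  simp only [Iset, Set.mem_ofPred_eq] at hμ ⊢
  linarith
end

section
/- Fix natural numbers s < s' and suppose Assumption A1 holds for g. Then for every natural number t with s' < t, one has I_{∞,s,s'} ⊆ I_{t,s,s'}; that is, the limiting comparison set is contained in every finite-time comparison set. -/
/-- `I_{∞,s,s'}`: the limiting comparison set as `t → ∞`. -/
def Iinf (y F : ℕ → ℝ) (s s' : ℕ) : Set ℝ :=
  {μ : ℝ | F s - F s' + ∑ i ∈ Finset.Icc (s + 1) s', (y i - μ) ^ 2 ≤ 0}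

open Filter Topology

theorem le_of_tendsto_of_monotone_from {α : Type*} [TopologicalSpace α] [Preorder α]
    [ClosedIciTopology α] {u : ℕ → α} {a : α} {N : ℕ}
    (hmono : ∀ m n, N < m → m ≤ n → u m ≤ u n) (hlim : Tendsto u atTop (𝓝 a))
    {m : ℕ} (hm : N < m) : u m ≤ a :=
  ge_of_tendsto hlim ((eventually_ge_atTop m).mono fun _ hn => hmono m _ hm hn)

theorem Finset.sum_Icc_succ_split {M : Type*} [AddCommMonoid M] (f : ℕ → M) {a b c : ℕ}
    (hab : a ≤ b) (hbc : b ≤ c) :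
    ∑ i ∈ Icc (a + 1) c, f i = ∑ i ∈ Icc (a + 1) b, f i + ∑ i ∈ Icc (b + 1) c, f i := by
  simp only [Icc_add_one_left_eq_Ioc]
  exact (sum_Ioc_consecutive f hab hbc).symm

theorem ftilde_sub_ftilde (y F : ℕ → ℝ) (α β : ℝ) (g : ℕ → ℝ) {t s s' : ℕ}
    (hss' : s ≤ s') (hs't : s' ≤ t) (μ : ℝ) :
    ftilde y F α β g t s μ - ftilde y F α β g t s' μ =
      (F s - F s' + ∑ i ∈ Finset.Icc (s + 1) s', (y i - μ) ^ 2) +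
        β * (g (t - s') - g (t - s)) := by
  rw [ftilde, ftilde, Finset.sum_Icc_succ_split _ hss' hs't]
  ring

/-- under Assumption A1, for fixed `s < s'`, the limiting comparison set
`I_{∞,s,s'}` is contained in every finite-time comparison set `I_{t,s,s'}` with `t > s'`. -/
theorem Iinf_subset_Iset (y F : ℕ → ℝ) (α β : ℝ) (hβ : 0 ≤ β) (g : ℕ → ℝ)
    (hA1 : ∀ s s' : ℕ, s < s' →
      (∀ t₁ t₂ : ℕ, s' < t₁ → t₁ ≤ t₂ →
        g (t₁ - s') - g (t₁ - s) ≤ g (t₂ - s') - g (t₂ - s)) ∧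
      Filter.Tendsto (fun t : ℕ => g (t - s') - g (t - s)) Filter.atTop (nhds 0))
    (s s' : ℕ) (hss' : s < s') :
    ∀ t : ℕ, s' < t → Iinf y F s s' ⊆ Iset y F α β g t s s' := by
  intro t ht μ hμ
  obtain ⟨hmono, hlim⟩ := hA1 s s' hss'
  have hg : g (t - s') - g (t - s) ≤ 0 := le_of_tendsto_of_monotone_from hmono hlim ht
  have hdiff := ftilde_sub_ftilde y F α β g hss'.le ht.le μ
  have hμ' : F s - F s' + ∑ i ∈ Finset.Icc (s + 1) s', (y i - μ) ^ 2 ≤ 0 := hμ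
  show ftilde y F α β g t s μ ≤ ftilde y F α β g t s' μ
  linarith [mul_nonpos_of_nonneg_of_nonpos hβ hg]
end

section
/- (Lemma A.1(a): the PELT condition holds for the multiscale cost.) Let y : ℕ → ℝ, let g : ℕ → ℝ be any function, let β ≥ 0, let n ≥ 2 be a natural number, and set K = 2β·(min_{1 ≤ k ≤ n} g(k)) − β·(max_{1 ≤ k ≤ n} g(k)). Then for all natural numbers s < s' < t with t ≤ n, one has C_{s+1:s'} + C_{s'+1:t} + K ≤ C_{s+1:t}. -/
/-- `ȳ_{a+1:b}`: the empirical mean of `y` over the indices `a+1, …, b`. -/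
noncomputable def ybar (y : ℕ → ℝ) (a b : ℕ) : ℝ :=
  (1 / ((b : ℝ) - (a : ℝ))) * ∑ i ∈ Finset.Icc (a + 1) b, y i

/-- `SS_{a+1:b}`: the within-segment sum of squares of `y` over `a+1, …, b`. -/
noncomputable def SS (y : ℕ → ℝ) (a b : ℕ) : ℝ :=
  ∑ i ∈ Finset.Icc (a + 1) b, (y i - ybar y a b) ^ 2

/-- `C_{a+1:b} = SS_{a+1:b} − β·g(b − a)`: the multiscale segment cost for a
penalty function `g : ℕ → ℝ`. -/
noncomputable def segCost (y : ℕ → ℝ) (g : ℕ → ℝ) (β : ℝ) (a b : ℕ) : ℝ :=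
  SS y a b - β * g (b - a)

lemma sum_dev_zero (y : ℕ → ℝ) (a b : ℕ) (hab : a < b) :
    ∑ i ∈ Finset.Icc (a + 1) b, (y i - ybar y a b) = 0 := by
  have hcard : (Finset.Icc (a + 1) b).card = b - a := by
    rw [Nat.card_Icc]; omega
  have hne : (b : ℝ) - (a : ℝ) ≠ 0 := by
    have : (a : ℝ) < b := by exact_mod_cast hab
    linarith
  rw [Finset.sum_sub_distrib, Finset.sum_const, hcard, nsmul_eq_mul, ybar]
  have hcast : ((b - a : ℕ) : ℝ) = (b : ℝ) - (a : ℝ) := by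
    have : (a : ℝ) ≤ b := by exact_mod_cast hab.le
    rw [Nat.cast_sub hab.le]
  rw [hcast]
  field_simp
  ring

lemma SS_le_sum_sq (y : ℕ → ℝ) (a b : ℕ) (hab : a < b) (c : ℝ) :
    SS y a b ≤ ∑ i ∈ Finset.Icc (a + 1) b, (y i - c) ^ 2 := by
  have key : ∀ i, (y i - c) ^ 2 =
      (y i - ybar y a b) ^ 2 + 2 * (ybar y a b - c) * (y i - ybar y a b)
        + (ybar y a b - c) ^ 2 := by
    intro i; ring
  calc SS y a b ≤ SS y a b + (Finset.Icc (a + 1) b).card • (ybar y a b - c) ^ 2 := by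
        have : (0:ℝ) ≤ (Finset.Icc (a + 1) b).card • (ybar y a b - c) ^ 2 := by
          positivity
        linarith
    _ = ∑ i ∈ Finset.Icc (a + 1) b, (y i - c) ^ 2 := by
        rw [Finset.sum_congr rfl fun i _ => key i, Finset.sum_add_distrib,
          Finset.sum_add_distrib, ← Finset.mul_sum, sum_dev_zero y a b hab,
          Finset.sum_const, SS]
        ring

lemma SS_split (y : ℕ → ℝ) (s s' t : ℕ) (h1 : s < s') (h2 : s' < t) :
    SS y s s' + SS y s' t ≤ SS y s t := by
  have hsplit : ∑ i ∈ Finset.Icc (s + 1) s', (y i - ybar y s t) ^ 2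
      + ∑ i ∈ Finset.Icc (s' + 1) t, (y i - ybar y s t) ^ 2 = SS y s t := by
    unfold SS
    rw [Finset.Icc_add_one_left_eq_Ioc, Finset.Icc_add_one_left_eq_Ioc, Finset.Icc_add_one_left_eq_Ioc]
    exact Finset.sum_Ioc_consecutive _ h1.le h2.le
  have h3 := SS_le_sum_sq y s s' h1 (ybar y s t)
  have h4 := SS_le_sum_sq y s' t h2 (ybar y s t)
  linarith

/-- Lemma A.1(a): for any `g : ℕ → ℝ`, `β ≥ 0`, `n ≥ 2` and
`K = 2β·min_{1 ≤ k ≤ n} g(k) − β·max_{1 ≤ k ≤ n} g(k)`, the PELT condition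
`C_{s+1:s'} + C_{s'+1:t} + K ≤ C_{s+1:t}` holds for all `s < s' < t ≤ n`. -/
theorem pelt_condition_general (y : ℕ → ℝ) (g : ℕ → ℝ) (β : ℝ) (hβ : 0 ≤ β)
    (n : ℕ) (hn : 2 ≤ n) :
    ∀ s s' t : ℕ, s < s' → s' < t → t ≤ n →
      segCost y g β s s' + segCost y g β s' t +
        (2 * β * (Finset.Icc 1 n).inf' (Finset.nonempty_Icc.2 (by omega)) g
          - β * (Finset.Icc 1 n).sup' (Finset.nonempty_Icc.2 (by omega)) g)
      ≤ segCost y g β s t := by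
  intro s s' t h1 h2 h3
  have hSS := SS_split y s s' t h1 h2
  have hm1 : s' - s ∈ Finset.Icc 1 n := by simp [Finset.mem_Icc]; omega
  have hm2 : t - s' ∈ Finset.Icc 1 n := by simp [Finset.mem_Icc]; omega
  have hm3 : t - s ∈ Finset.Icc 1 n := by simp [Finset.mem_Icc]; omega
  have hi1 := Finset.inf'_le g hm1
  have hi2 := Finset.inf'_le g hm2
  have hs3 := Finset.le_sup' g hm3
  simp only [segCost]
  nlinarith [mul_le_mul_of_nonneg_left hi1 hβ, mul_le_mul_of_nonneg_left hi2 hβ,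
    mul_le_mul_of_nonneg_left hs3 hβ]
end

section
/- (PELT condition for the logarithmic multiscale penalty.) Let y : ℕ → ℝ and β ≥ 0. Then for all natural numbers s < s' < t, one has (SS_{s+1:s'} − β·log(s'−s)) + (SS_{s'+1:t} − β·log(t−s')) − β·log 2 ≤ SS_{s+1:t} − β·log(t−s). -/
/-!
Splitting a segment can only lower the residual sum of squares, because each half is at least
as well fitted by its own mean as by the mean of the whole segment. For the penalties, two
lengths `a, b ≥ 1` satisfy `a + b ≤ 2ab`, i.e. `log (a + b) ≤ log a + log b + log 2`, and
`β ≥ 0` preserves this inequality.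
-/

open Finset

theorem Finset.sum_sq_sub_eq_sum_sq_sub_mean_add {ι : Type*} (S : Finset ι) (f : ι → ℝ) (c : ℝ) :
    ∑ i ∈ S, (f i - c) ^ 2 =
      ∑ i ∈ S, (f i - (∑ j ∈ S, f j) / #S) ^ 2 + #S * ((∑ j ∈ S, f j) / #S - c) ^ 2 := by
  set m := (∑ j ∈ S, f j) / #S
  have hcentered : ∑ i ∈ S, (f i - m) = 0 := by
    rcases S.eq_empty_or_nonempty with rfl | hS
    · simp
    · rw [sum_sub_distrib, sum_const, nsmul_eq_mul, mul_div_cancel₀ _ (by positivity), sub_self]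
  calc ∑ i ∈ S, (f i - c) ^ 2
      = ∑ i ∈ S, ((f i - m) ^ 2 + 2 * (m - c) * (f i - m) + (m - c) ^ 2) :=
        sum_congr rfl fun _ _ => by ring
    _ = ∑ i ∈ S, (f i - m) ^ 2 + #S * (m - c) ^ 2 := by
        rw [sum_add_distrib, sum_add_distrib, ← mul_sum, hcentered, sum_const, nsmul_eq_mul,
          mul_zero, add_zero]

theorem Finset.sum_sq_sub_mean_le {ι : Type*} (S : Finset ι) (f : ι → ℝ) (c : ℝ) :
    ∑ i ∈ S, (f i - (∑ j ∈ S, f j) / #S) ^ 2 ≤ ∑ i ∈ S, (f i - c) ^ 2 := by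
  rw [S.sum_sq_sub_eq_sum_sq_sub_mean_add f c]
  exact le_add_of_nonneg_right (by positivity)

theorem ybar_eq_sum_div_card (y : ℕ → ℝ) (a b : ℕ) :
    ybar y a b = (∑ i ∈ Icc (a + 1) b, y i) / #(Icc (a + 1) b) := by
  rcases le_total a b with hab | hba
  · rw [ybar, Nat.card_Icc, Nat.add_sub_add_right, Nat.cast_sub hab, one_div_mul_eq_div]
  · simp [ybar, Icc_eq_empty_of_lt (Nat.lt_succ_of_le hba)]

theorem SS_le_sum_sq_sub (y : ℕ → ℝ) (a b : ℕ) (c : ℝ) :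
    SS y a b ≤ ∑ i ∈ Icc (a + 1) b, (y i - c) ^ 2 := by
  rw [SS, ybar_eq_sum_div_card]
  exact sum_sq_sub_mean_le _ y c

theorem SS_add_SS_le (y : ℕ → ℝ) {s s' t : ℕ} (hss' : s ≤ s') (hs't : s' ≤ t) :
    SS y s s' + SS y s' t ≤ SS y s t := by
  have hsplit : ∑ i ∈ Icc (s + 1) s', (y i - ybar y s t) ^ 2 +
      ∑ i ∈ Icc (s' + 1) t, (y i - ybar y s t) ^ 2 = SS y s t := by
    simp only [SS, Icc_add_one_left_eq_Ioc]
    exact sum_Ioc_consecutive _ hss' hs't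
  linarith [SS_le_sum_sq_sub y s s' (ybar y s t), SS_le_sum_sq_sub y s' t (ybar y s t)]

theorem Real.log_add_le_log_add_log_add_log_two {a b : ℝ} (ha : 1 ≤ a) (hb : 1 ≤ b) :
    Real.log (a + b) ≤ Real.log a + Real.log b + Real.log 2 := by
  have hab : a + b ≤ a * b * 2 := by nlinarith [mul_nonneg (sub_nonneg.2 ha) (sub_nonneg.2 hb)]
  calc Real.log (a + b) ≤ Real.log (a * b * 2) := Real.log_le_log (by linarith) hab
    _ = Real.log a + Real.log b + Real.log 2 := by
      rw [Real.log_mul (by positivity) two_ne_zero, Real.log_mul (by positivity) (by positivity)]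

theorem one_le_cast_sub_cast {m n : ℕ} (h : m < n) : (1 : ℝ) ≤ (n : ℝ) - m := by
  have : (m : ℝ) + 1 ≤ n := by exact_mod_cast h
  linarith

/-- PELT condition for the logarithmic multiscale penalty: for `β ≥ 0`
and naturals `s < s' < t`,
`(SS_{s+1:s'} − β·log(s'−s)) + (SS_{s'+1:t} − β·log(t−s')) − β·log 2
  ≤ SS_{s+1:t} − β·log(t−s)`. -/
theorem pelt_condition_log (y : ℕ → ℝ) (β : ℝ) (hβ : 0 ≤ β) :
    ∀ s s' t : ℕ, s < s' → s' < t →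
      (SS y s s' - β * Real.log ((s' : ℝ) - (s : ℝ))) +
        (SS y s' t - β * Real.log ((t : ℝ) - (s' : ℝ))) - β * Real.log 2
      ≤ SS y s t - β * Real.log ((t : ℝ) - (s : ℝ)) := by
  intro s s' t hss' hs't
  have hSS := SS_add_SS_le y hss'.le hs't.le
  have hlog := Real.log_add_le_log_add_log_add_log_two
    (one_le_cast_sub_cast hss') (one_le_cast_sub_cast hs't)
  rw [sub_add_sub_cancel'] at hlog
  linarith [mul_le_mul_of_nonneg_left hlog hβ]
end

section
/- (Appendix B: adaptive PELT pruning for concave multiscale penalties.) Let y : ℕ → ℝ, let g : ℝ → ℝ be concave on [1, ∞), let β ≥ 0, let s < s' be natural numbers with ℓ = s' − s, and let F_s, F_{s'} be real numbers. Set K_ℓ = β·(g(ℓ) + g(1) − g(ℓ+1)). If F_s + SS_{s+1:s'} − β·g(ℓ) + K_ℓ ≥ F_{s'}, then for every natural number t > s', writing ℓ' = t − s', one has F_s + SS_{s+1:t} − β·g(ℓ + ℓ') ≥ F_{s'} + SS_{s'+1:t} − β·g(ℓ'). -/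
lemma sum_sub_ybar (y : ℕ → ℝ) {a b : ℕ} (h : a < b) :
    ∑ i ∈ Finset.Icc (a + 1) b, (y i - ybar y a b) = 0 := by
  have hne : ((b : ℝ) - (a : ℝ)) ≠ 0 := by
    have : (a : ℝ) < (b : ℝ) := by exact_mod_cast h
    linarith
  rw [Finset.sum_sub_distrib, Finset.sum_const, Nat.card_Icc]
  have hcard : ((b + 1 - (a + 1) : ℕ) : ℝ) = (b : ℝ) - (a : ℝ) := by
    have : b + 1 - (a + 1) = b - a := by omega
    rw [this, Nat.cast_sub h.le]
  rw [nsmul_eq_mul, hcard]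
  unfold ybar
  field_simp
  ring

lemma SS_le (y : ℕ → ℝ) {a b : ℕ} (h : a < b) (μ : ℝ) :
    SS y a b ≤ ∑ i ∈ Finset.Icc (a + 1) b, (y i - μ) ^ 2 := by
  have key : ∑ i ∈ Finset.Icc (a + 1) b, (y i - μ) ^ 2 =
      (∑ i ∈ Finset.Icc (a + 1) b, (y i - ybar y a b) ^ 2) +
      (2 * (ybar y a b - μ)) * (∑ i ∈ Finset.Icc (a + 1) b, (y i - ybar y a b)) +
      (∑ i ∈ Finset.Icc (a + 1) b, (ybar y a b - μ) ^ 2) := by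
    rw [Finset.mul_sum, ← Finset.sum_add_distrib, ← Finset.sum_add_distrib]
    exact Finset.sum_congr rfl fun i _ => by ring
  have hnn : 0 ≤ ∑ i ∈ Finset.Icc (a + 1) b, (ybar y a b - μ) ^ 2 :=
    Finset.sum_nonneg fun i _ => sq_nonneg _
  rw [key, sum_sub_ybar y h]
  unfold SS
  linarith

lemma SS_superadd (y : ℕ → ℝ) {s s' t : ℕ} (h1 : s < s') (h2 : s' < t) :
    SS y s s' + SS y s' t ≤ SS y s t := by
  have hIcc : ∀ a b : ℕ, Finset.Icc (a + 1) b = Finset.Ioc a b := by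
    intro a b; ext i; simp only [Finset.mem_Icc, Finset.mem_Ioc]; omega
  have hsplit : (∑ i ∈ Finset.Ioc s s', (y i - ybar y s t) ^ 2) +
      (∑ i ∈ Finset.Ioc s' t, (y i - ybar y s t) ^ 2) =
      ∑ i ∈ Finset.Ioc s t, (y i - ybar y s t) ^ 2 :=
    Finset.sum_Ioc_consecutive _ h1.le h2.le
  have e1 := SS_le y h1 (ybar y s t)
  have e2 := SS_le y h2 (ybar y s t)
  rw [hIcc] at e1 e2
  have : SS y s t = ∑ i ∈ Finset.Ioc s t, (y i - ybar y s t) ^ 2 := by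
    unfold SS; rw [hIcc]
  rw [this, ← hsplit]
  linarith

lemma g_chord {g : ℝ → ℝ} (hg : ConcaveOn ℝ (Set.Ici (1:ℝ)) g) {a b : ℝ}
    (ha : 1 ≤ a) (hb : 1 ≤ b) : g (a + b - 1) + g 1 ≤ g a + g b := by
  rcases eq_or_lt_of_le ha with h1 | h1
  · have : a + b - 1 = b := by linarith
    rw [this, ← h1]
    linarith
  · set d : ℝ := a + b - 2 with hd
    have hdpos : 0 < d := by simp only [hd]; linarith
    set lam : ℝ := (b - 1) / d with hlam
    have hlam0 : 0 ≤ lam := div_nonneg (by linarith) hdpos.le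
    have hlam1 : lam ≤ 1 := by
      rw [hlam, div_le_one hdpos]; linarith
    have h1mem : (1 : ℝ) ∈ Set.Ici (1:ℝ) := Set.mem_Ici.mpr le_rfl
    have hcmem : a + b - 1 ∈ Set.Ici (1:ℝ) := Set.mem_Ici.mpr (by linarith)
    have hA := hg.2 h1mem hcmem hlam0 (by linarith : (0:ℝ) ≤ 1 - lam) (by ring)
    have hB := hg.2 h1mem hcmem (by linarith : (0:ℝ) ≤ 1 - lam) hlam0 (by ring)
    simp only [smul_eq_mul] at hA hB
    have hxa : lam * 1 + (1 - lam) * (a + b - 1) = a := by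
      rw [hlam]; field_simp; ring
    have hxb : (1 - lam) * 1 + lam * (a + b - 1) = b := by
      rw [hlam]; field_simp; ring
    rw [hxa] at hA
    rw [hxb] at hB
    linarith

/-- Appendix B: adaptive PELT pruning for concave multiscale penalties:
with `g` concave on `[1, ∞)`, `β ≥ 0`, `ℓ = s' − s` and
`K_ℓ = β·(g(ℓ) + g(1) − g(ℓ+1))`, if `F_s + SS_{s+1:s'} − β·g(ℓ) + K_ℓ ≥ F_{s'}`,
then for every `t > s'`, with `ℓ' = t − s'`,
`F_s + SS_{s+1:t} − β·g(ℓ+ℓ') ≥ F_{s'} + SS_{s'+1:t} − β·g(ℓ')`. -/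
theorem adaptive_pelt_pruning (y : ℕ → ℝ) (g : ℝ → ℝ)
    (hg : ConcaveOn ℝ (Set.Ici 1) g) (β : ℝ) (hβ : 0 ≤ β)
    (s s' : ℕ) (hss' : s < s') (Fs Fs' : ℝ)
    (hprune : Fs + SS y s s' - β * g ((s' - s : ℕ) : ℝ) +
        β * (g ((s' - s : ℕ) : ℝ) + g 1 - g (((s' - s : ℕ) : ℝ) + 1)) ≥ Fs') :
    ∀ t : ℕ, s' < t →
      Fs + SS y s t - β * g (((s' - s : ℕ) : ℝ) + ((t - s' : ℕ) : ℝ))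
      ≥ Fs' + SS y s' t - β * g ((t - s' : ℕ) : ℝ) := by
  intro t ht
  set ℓ : ℝ := ((s' - s : ℕ) : ℝ) with hℓdef
  set ℓ' : ℝ := ((t - s' : ℕ) : ℝ) with hℓ'def
  have hℓ1 : 1 ≤ ℓ := by
    rw [hℓdef]; exact_mod_cast Nat.one_le_iff_ne_zero.mpr (by omega)
  have hℓ'1 : 1 ≤ ℓ' := by
    rw [hℓ'def]; exact_mod_cast Nat.one_le_iff_ne_zero.mpr (by omega)
  have hgineq : g (ℓ + ℓ') + g 1 ≤ g (ℓ + 1) + g ℓ' := by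
    have := g_chord hg (a := ℓ + 1) (b := ℓ') (by linarith) hℓ'1
    have heq : ℓ + 1 + ℓ' - 1 = ℓ + ℓ' := by ring
    rw [heq] at this
    linarith
  have hSS := SS_superadd y hss' ht
  have hβg : β * (g (ℓ + ℓ') + g 1) ≤ β * (g (ℓ + 1) + g ℓ') :=
    mul_le_mul_of_nonneg_left hgineq hβ
  nlinarith [hβg, hSS, hprune]
end
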